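/- Let G be a sheaf of abelian groups on a topological space X and W = {W_α}_{α∈I} a locally finite open covering of X. Suppose G admits a partition of unity subordinate to W, i.e., there are sheaf endomorphisms ρ_α: G → G and closed sets S_α ⊆ W_α such that the stalk map (ρ_α)_x is zero for every x ∉ S_α and Σ_α ρ_α = id (the locally finite sum of the ρ_α is the identity). Then the Čech cohomology H^q(W;G) vanishes for all q ≥ 1; explicitly, every Čech q-cocycle σ ∈ C^q(W;G) with δσ = 0 is of the form σ = δτ, where τ_{α_0…α_{q-1}} = Σ_α ρ_α σ_{α α_0 … α_{q-1}}, each term being extended by zero from W_{α α_0 … α_{q-1}} to W_{α_0…α_{q-1}} using that its support lies in the closed set S_α. -/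

import Mathlib

/-!
The partition of unity yields a contracting homotopy: `τ_{αs} = Σ_i ρ_i σ_{i αs}`, where each
term is extended by zero from `W_{i αs}` to `W_{αs}` (possible since `ρ_i` vanishes off the
closed set `S_i ⊆ W_i`), and the sum is a section because it is locally finite. Equality
`δτ = σ` is checked on stalks: at `x ∈ W_i` the cocycle condition `(δσ)_{i βs} = 0` says
`σ_{βs} = Σ_ν (-1)^ν σ_{i ∂_ν βs}`, so the `i`-th terms of `(δτ)_{βs}` add up to `ρ_i σ_{βs}`,
while for `x ∉ W_i` both vanish; summing over `i` gives `Σ_i ρ_i σ_{βs} = σ_{βs}`.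
-/

open CategoryTheory CategoryTheory.Limits TopologicalSpace Opposite

universe u

namespace Paper

variable {X : TopCat.{u}} {ι : Type u}

/-- The intersection of the members of an open covering along a multi-index. -/
def iInt (W : ι → Opens ↑X) {n : ℕ} (αs : Fin n → ι) : Opens ↑X := ⨅ k, W (αs k)

/-- Čech cochains in degree `n` of a presheaf of abelian groups with respect to an
open covering. -/
abbrev cechPi (F : TopCat.Presheaf AddCommGrpCat.{u} X) (W : ι → Opens ↑X) (n : ℕ) : Type u :=
  ∀ αs : Fin (n + 1) → ι, ↥(F.obj (op (iInt W αs)))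

/-- The Čech differential (as a function). -/
def cechδfun (F : TopCat.Presheaf AddCommGrpCat.{u} X) (W : ι → Opens ↑X) (n : ℕ)
    (σ : cechPi F W n) : cechPi F W (n + 1) := fun βs =>
  ∑ ν : Fin (n + 2), ((-1 : ℤ) ^ (ν : ℕ)) •
    (F.map (homOfLE (le_iInf fun j => iInf_le (fun k => W (βs k)) (ν.succAbove j))).op
      (σ (βs ∘ ν.succAbove)))

/-- The Čech differential. -/
def cechδ (F : TopCat.Presheaf AddCommGrpCat.{u} X) (W : ι → Opens ↑X) (n : ℕ) :
    cechPi F W n →+ cechPi F W (n + 1) :=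
  AddMonoidHom.mk' (cechδfun F W n) (fun σ τ => by
    funext βs
    change _ = cechδfun F W n σ βs + cechδfun F W n τ βs
    unfold cechδfun
    refine Eq.trans ?_ Finset.sum_add_distrib
    refine Finset.sum_congr rfl fun ν _ => ?_
    refine Eq.trans ?_ (smul_add _ _ _)
    congr 1
    first
      | exact map_add _ _ _
      | exact (map_add (ConcreteCategory.hom _) _ _ :)
      | exact AddMonoidHom.map_add _ _ _)

/-- A partition of unity for a sheaf of abelian groups `G`, subordinate to a locally
finite open covering `W`: sheaf endomorphisms `ρ i` supported in closed sets `S i ⊆ W i`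
whose (locally finite) sum is the identity. -/
structure PartitionOfUnity (G : TopCat.Sheaf AddCommGrpCat.{u} X) (W : ι → Opens ↑X) where
  ρ : ι → (G.val ⟶ G.val)
  S : ι → Set ↑X
  S_closed : ∀ i, IsClosed (S i)
  S_subset : ∀ i, S i ⊆ (W i : Set ↑X)
  vanish : ∀ (i : ι) (x : ↑X), x ∉ S i →
    (TopCat.Presheaf.stalkFunctor AddCommGrpCat.{u} x).map (ρ i) = 0
  sum_eq : ∀ (U : Opens ↑X) (s : ↥(G.val.obj (op U))) (x : ↑X), x ∈ U →
    ∃ (U' : Opens ↑X) (_ : x ∈ U') (hU' : U' ≤ U) (t : Finset ι),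
      (∀ i ∉ t, G.val.map (homOfLE hU').op ((ρ i).app (op U) s) = 0) ∧
      (∑ i ∈ t, G.val.map (homOfLE hU').op ((ρ i).app (op U) s))
        = G.val.map (homOfLE hU').op s

open TopCat.Presheaf

theorem _root_.TopCat.Sheaf.exists_section_germ_eq (G : TopCat.Sheaf AddCommGrpCat.{u} X)
    {U : Opens X} (g : ∀ x ∈ U, G.presheaf.stalk x)
    (hg : ∀ x ∈ U, ∃ (V : Opens X) (_ : x ∈ V) (hVU : V ≤ U) (s : G.presheaf.obj (op V)),
      ∀ y (hy : y ∈ V), G.presheaf.germ V y hy s = g y (hVU hy)) :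
    ∃ s : G.presheaf.obj (op U), ∀ x (hx : x ∈ U), G.presheaf.germ U x hx s = g x hx := by
  choose V hxV hVU s hs using hg
  obtain ⟨t, ht, -⟩ := G.existsUnique_gluing' (fun x : U => V x.1 x.2) U
    (fun x => homOfLE (hVU x.1 x.2))
    (fun x hx => Opens.mem_iSup.2 ⟨⟨x, hx⟩, hxV x hx⟩) (fun x => s x.1 x.2) (by
      intro x y
      apply section_ext G
      intro z hz
      rw [germ_res_apply, germ_res_apply, hs, hs])
  refine ⟨t, fun x hx => ?_⟩
  rw [← hs x hx x (hxV x hx), ← ht ⟨x, hx⟩, germ_res_apply]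

theorem _root_.TopCat.Sheaf.exists_extension_by_zero (G : TopCat.Sheaf AddCommGrpCat.{u} X)
    {S : Set X} (hS : IsClosed S) {U V : Opens X} (hSV : ∀ x ∈ U, x ∈ S → x ∈ V)
    (s : G.presheaf.obj (op V)) (hs : ∀ x (hx : x ∈ V), x ∉ S → G.presheaf.germ V x hx s = 0) :
    ∃ s' : G.presheaf.obj (op U),
      (∀ x (hxU : x ∈ U) (hxV : x ∈ V), G.presheaf.germ U x hxU s' = G.presheaf.germ V x hxV s) ∧
      ∀ x (hx : x ∈ U), x ∉ S → G.presheaf.germ U x hx s' = 0 := by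
  classical
  obtain ⟨s', hs'⟩ := G.exists_section_germ_eq (U := U)
    (fun x _ => if hxV : x ∈ V then G.presheaf.germ V x hxV s else 0) fun x hx => by
      by_cases hxS : x ∈ S
      · refine ⟨U ⊓ V, ⟨hx, hSV x hx hxS⟩, inf_le_left,
          G.presheaf.map (homOfLE inf_le_right).op s, fun y hy => ?_⟩
        rw [germ_res_apply, dif_pos (show y ∈ V from hy.2)]
      · refine ⟨U ⊓ ⟨Sᶜ, hS.isOpen_compl⟩, ⟨hx, hxS⟩, inf_le_left, 0, fun y hy => ?_⟩
        rw [map_zero]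
        split_ifs with hyV
        exacts [(hs y hyV hy.2).symm, rfl]
  refine ⟨s', fun x hxU hxV => by rw [hs', dif_pos hxV], fun x hx hxS => ?_⟩
  rw [hs']
  split_ifs with hxV
  exacts [hs x hxV hxS, rfl]

theorem _root_.TopCat.Sheaf.exists_section_germ_eq_finsum (G : TopCat.Sheaf AddCommGrpCat.{u} X)
    {κ : Type*} {U : Opens X} (c : κ → G.presheaf.obj (op U))
    (hc : ∀ x ∈ U, ∃ V : Opens X, x ∈ V ∧ ∃ t : Finset κ,
      ∀ i ∉ t, ∀ y (hy : y ∈ U), y ∈ V → G.presheaf.germ U y hy (c i) = 0) :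
    ∃ s : G.presheaf.obj (op U), ∀ x (hx : x ∈ U),
      G.presheaf.germ U x hx s = ∑ᶠ i, G.presheaf.germ U x hx (c i) := by
  refine G.exists_section_germ_eq _ fun x hx => ?_
  obtain ⟨V, hxV, t, ht⟩ := hc x hx
  refine ⟨U ⊓ V, ⟨hx, hxV⟩, inf_le_left,
    ∑ i ∈ t, G.presheaf.map (homOfLE inf_le_left).op (c i), fun y hy => ?_⟩
  rw [map_sum, finsum_eq_sum_of_support_subset _ fun i hi => ?_]
  · exact Finset.sum_congr rfl fun i _ => germ_res_apply _ _ _ _ _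
  · by_contra hit
    exact hi (ht i hit y hy.1 hy.2)

theorem _root_.LocallyFinite.exists_opens_finset {κ : Type*} {Y : Type*} [TopologicalSpace Y]
    {f : κ → Set Y} (hf : LocallyFinite f) (x : Y) :
    ∃ O : Opens Y, x ∈ O ∧ ∃ t : Finset κ, ∀ i ∉ t, ∀ y ∈ O, y ∉ f i := by
  obtain ⟨N, hN, hfin⟩ := hf x
  obtain ⟨O, hON, hO, hxO⟩ := mem_nhds_iff.1 hN
  exact ⟨⟨O, hO⟩, hxO, hfin.toFinset, fun i hi y hy hyi =>
    hi (hfin.mem_toFinset.2 ⟨y, hyi, hON hy⟩)⟩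

theorem mem_iInt {W : ι → Opens X} {n : ℕ} {αs : Fin n → ι} {x : X} :
    x ∈ iInt W αs ↔ ∀ k, x ∈ W (αs k) := by
  rw [← SetLike.mem_coe, iInt, Opens.coe_iInf, Set.mem_iInter]
  rfl

theorem mem_iInt_cons {W : ι → Opens X} {n : ℕ} {i : ι} {αs : Fin n → ι} {x : X} :
    x ∈ iInt W (Fin.cons i αs : Fin (n + 1) → ι) ↔ x ∈ W i ∧ x ∈ iInt W αs := by
  simp only [mem_iInt, Fin.forall_fin_succ, Fin.cons_zero, Fin.cons_succ]

theorem iInt_le_iInt_comp (W : ι → Opens X) {m n : ℕ} (αs : Fin n → ι) (f : Fin m → Fin n) :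
    iInt W αs ≤ iInt W (αs ∘ f) :=
  le_iInf fun j => iInf_le (fun k => W (αs k)) (f j)

theorem germ_cechδ (F : TopCat.Presheaf AddCommGrpCat.{u} X) (W : ι → Opens X) {n : ℕ}
    (σ : cechPi F W n) (βs : Fin (n + 2) → ι) {x : X} (hx : x ∈ iInt W βs) :
    F.germ _ x hx (cechδ F W n σ βs) = ∑ ν : Fin (n + 2), ((-1 : ℤ) ^ (ν : ℕ)) •
      F.germ _ x (iInt_le_iInt_comp W βs ν.succAbove hx) (σ (βs ∘ ν.succAbove)) := by
  change F.germ _ x hx (cechδfun F W n σ βs) = _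
  refine (map_sum _ _ _).trans (Finset.sum_congr rfl fun ν _ => ?_)
  exact (map_zsmul _ _ _).trans (congrArg _ (germ_res_apply _ _ _ _ _))

theorem germ_congr_index (F : TopCat.Presheaf AddCommGrpCat.{u} X) (W : ι → Opens X) {n : ℕ}
    (σ : ∀ αs : Fin n → ι, F.obj (op (iInt W αs))) {αs αs' : Fin n → ι} (h : αs = αs')
    {x : X} (hx : x ∈ iInt W αs) (hx' : x ∈ iInt W αs') :
    F.germ _ x hx (σ αs) = F.germ _ x hx' (σ αs') := by
  subst h
  rfl

theorem germ_cechδ_cons (F : TopCat.Presheaf AddCommGrpCat.{u} X) (W : ι → Opens X) {n : ℕ}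
    (σ : cechPi F W (n + 1)) (i : ι) (βs : Fin (n + 2) → ι) {x : X} (hi : x ∈ W i)
    (hx : x ∈ iInt W βs) :
    F.germ _ x (mem_iInt_cons.2 ⟨hi, hx⟩) (cechδ F W (n + 1) σ (Fin.cons i βs)) =
      F.germ _ x hx (σ βs) - ∑ ν : Fin (n + 2), ((-1 : ℤ) ^ (ν : ℕ)) •
        F.germ _ x (mem_iInt_cons.2 ⟨hi, iInt_le_iInt_comp W βs ν.succAbove hx⟩)
          (σ (Fin.cons i (βs ∘ ν.succAbove))) := by
  rw [germ_cechδ, Fin.sum_univ_succ, sub_eq_add_neg, ← Finset.sum_neg_distrib]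
  congr 1
  · rw [Fin.val_zero, pow_zero, one_smul]
    exact germ_congr_index F W σ (funext fun j => by simp) _ _
  · refine Finset.sum_congr rfl fun ν _ => ?_
    rw [Fin.val_succ, pow_succ, mul_neg_one, neg_smul]
    congr 2
    refine germ_congr_index F W σ (funext fun k => ?_) _ _
    refine Fin.cases ?_ (fun j => ?_) k <;> simp

theorem germ_eq_sum_cons_of_cechδ_eq_zero (F : TopCat.Presheaf AddCommGrpCat.{u} X)
    (W : ι → Opens X) {n : ℕ} {σ : cechPi F W (n + 1)} (hσ : cechδ F W (n + 1) σ = 0) (i : ι)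
    (βs : Fin (n + 2) → ι) {x : X} (hi : x ∈ W i) (hx : x ∈ iInt W βs) :
    F.germ _ x hx (σ βs) = ∑ ν : Fin (n + 2), ((-1 : ℤ) ^ (ν : ℕ)) •
      F.germ _ x (mem_iInt_cons.2 ⟨hi, iInt_le_iInt_comp W βs ν.succAbove hx⟩)
        (σ (Fin.cons i (βs ∘ ν.succAbove))) := by
  have hcone := germ_cechδ_cons F W σ i βs hi hx
  rwa [hσ, Pi.zero_apply, map_zero, eq_comm, sub_eq_zero] at hcone

namespace PartitionOfUnity

variable {G : TopCat.Sheaf AddCommGrpCat.{u} X} {W : ι → Opens X} (pu : PartitionOfUnity G W)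

theorem sum_stalkFunctor_map {x : X} {t : Finset ι} (ht : ∀ i ∉ t, x ∉ pu.S i)
    (g : G.presheaf.stalk x) : ∑ i ∈ t, (stalkFunctor AddCommGrpCat x).map (pu.ρ i) g = g := by
  obtain ⟨U, hxU, s, rfl⟩ := G.presheaf.exists_germ_eq g
  obtain ⟨U', hxU', hU', t', hvan, hsum⟩ := pu.sum_eq U s x hxU
  have hρ : ∀ i, (stalkFunctor AddCommGrpCat x).map (pu.ρ i) (G.presheaf.germ U x hxU s) =
      G.presheaf.germ U' x hxU' (G.presheaf.map (homOfLE hU').op ((pu.ρ i).app (op U) s)) :=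
    fun i => by rw [germ_res_apply, stalkFunctor_map_germ_apply]
  -- both finite sums equal the `finsum`, whose support lies in `t` and in `t'`
  refine (finsum_eq_sum_of_support_subset _ fun i hi => ?_).symm.trans
    ((finsum_eq_sum_of_support_subset (s := t') _ fun i hi => ?_).trans ?_)
  · by_contra hit
    exact hi (by beta_reduce; rw [pu.vanish i x (ht i hit)]; rfl)
  · by_contra hit
    exact hi (by beta_reduce; rw [hρ, hvan i hit, map_zero]; rfl)
  · refine (Finset.sum_congr rfl fun i _ => hρ i).trans ?_
    exact (map_sum _ _ _).symm.trans ((congrArg _ hsum).trans (germ_res_apply _ _ _ _ _))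

theorem exists_extension_by_zero_ρ_app (i : ι) {n : ℕ} (αs : Fin n → ι)
    (s : G.presheaf.obj (op (iInt W (Fin.cons i αs : Fin (n + 1) → ι)))) :
    ∃ c : G.presheaf.obj (op (iInt W αs)),
      (∀ x (hx : x ∈ iInt W (Fin.cons i αs : Fin (n + 1) → ι)),
        G.presheaf.germ _ x (mem_iInt_cons.1 hx).2 c =
          (stalkFunctor AddCommGrpCat x).map (pu.ρ i) (G.presheaf.germ _ x hx s)) ∧
      ∀ x (hx : x ∈ iInt W αs), x ∉ pu.S i → G.presheaf.germ _ x hx c = 0 := by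
  obtain ⟨c, hc_germ, hc_zero⟩ := G.exists_extension_by_zero (pu.S_closed i)
    (fun x hx hxS => mem_iInt_cons.2 ⟨pu.S_subset i hxS, hx⟩) ((pu.ρ i).app _ s)
    fun x hx hxS => by rw [← stalkFunctor_map_germ_apply, pu.vanish i x hxS]; rfl
  refine ⟨c, fun x hx => ?_, hc_zero⟩
  rw [hc_germ x _ hx, stalkFunctor_map_germ_apply]

theorem alternating_sum_germ_extension_eq {q : ℕ} {σ : cechPi G.presheaf W (q + 1)}
    (hσ : cechδ G.presheaf W (q + 1) σ = 0) {i : ι}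
    {c : ∀ αs : Fin (q + 1) → ι, G.presheaf.obj (op (iInt W αs))}
    (hc_germ : ∀ αs x (hx : x ∈ iInt W (Fin.cons i αs : Fin (q + 2) → ι)),
      G.presheaf.germ _ x (mem_iInt_cons.1 hx).2 (c αs) =
        (stalkFunctor AddCommGrpCat x).map (pu.ρ i) (G.presheaf.germ _ x hx (σ (Fin.cons i αs))))
    (hc_zero : ∀ αs x (hx : x ∈ iInt W αs), x ∉ pu.S i → G.presheaf.germ _ x hx (c αs) = 0)
    (βs : Fin (q + 2) → ι) {x : X} (hx : x ∈ iInt W βs) :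
    ∑ ν : Fin (q + 2), ((-1 : ℤ) ^ (ν : ℕ)) •
        G.presheaf.germ _ x (iInt_le_iInt_comp W βs ν.succAbove hx) (c (βs ∘ ν.succAbove)) =
      (stalkFunctor AddCommGrpCat x).map (pu.ρ i) (G.presheaf.germ _ x hx (σ βs)) := by
  by_cases hi : x ∈ W i
  · rw [germ_eq_sum_cons_of_cechδ_eq_zero G.presheaf W hσ i βs hi hx]
    refine Eq.trans (Finset.sum_congr rfl fun ν _ => ?_) (map_sum _ _ _).symm
    rw [hc_germ]
    exact (map_zsmul _ _ _).symm
  · have hS : x ∉ pu.S i := fun h => hi (pu.S_subset i h)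
    rw [pu.vanish i x hS, Finset.sum_eq_zero fun ν _ => by rw [hc_zero _ _ _ hS, smul_zero]]
    rfl

end PartitionOfUnity

theorem cech_cocycle_is_coboundary_of_partitionOfUnity_general
    (G : TopCat.Sheaf AddCommGrpCat.{u} X) (W : ι → Opens ↑X)
    (hLF : LocallyFinite fun i => (W i : Set ↑X))
    (pu : PartitionOfUnity G W) :
    ∀ (q : ℕ) (σ : cechPi G.val W (q + 1)), cechδ G.val W (q + 1) σ = 0 →
      ∃ τ : cechPi G.val W q, cechδ G.val W q τ = σ := by
  intro q σ hσ
  choose c hc_germ hc_zero using fun αs i =>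
    pu.exists_extension_by_zero_ρ_app i αs (σ (Fin.cons i αs))
  choose τ hτ using fun αs => G.exists_section_germ_eq_finsum (c αs) fun x _ => by
    obtain ⟨O, hxO, t, ht⟩ := hLF.exists_opens_finset x
    exact ⟨O, hxO, t, fun i hi y hy hyO =>
      hc_zero αs i y hy fun hyS => ht i hi y hyO (pu.S_subset i hyS)⟩
  refine ⟨τ, funext fun βs => section_ext G _ _ _ fun x hx => ?_⟩
  obtain ⟨O, hxO, t, ht⟩ := hLF.exists_opens_finset x
  have hxS : ∀ i ∉ t, x ∉ pu.S i := fun i hi hxS => ht i hi x hxO (pu.S_subset i hxS)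
  calc (G.presheaf.germ _ x hx (cechδ G.presheaf W q τ βs) : G.presheaf.stalk x)
      = ∑ ν : Fin (q + 2), ((-1 : ℤ) ^ (ν : ℕ)) • ∑ i ∈ t, G.presheaf.germ _ x
          (iInt_le_iInt_comp W βs ν.succAbove hx) (c (βs ∘ ν.succAbove) i) := by
        rw [germ_cechδ]
        refine Finset.sum_congr rfl fun ν _ => ?_
        rw [hτ, finsum_eq_sum_of_support_subset _ fun i hi => ?_]
        by_contra hit
        exact hi (hc_zero _ i x _ (hxS i hit))
    _ = (∑ i ∈ t, (stalkFunctor AddCommGrpCat x).map (pu.ρ i)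
          (G.presheaf.germ _ x hx (σ βs)) : G.presheaf.stalk x) := by
        simp only [Finset.smul_sum]
        rw [Finset.sum_comm]
        exact Finset.sum_congr rfl fun i _ =>
          pu.alternating_sum_germ_extension_eq hσ (hc_germ · i) (hc_zero · i) βs hx
    _ = G.presheaf.germ _ x hx (σ βs) := pu.sum_stalkFunctor_map hxS _

/-- **Statement 11.** If a sheaf of abelian groups `G` admits a partition of unity
subordinate to a locally finite open covering `W` of `X`, then the Čech cohomology
`H^q(W; G)` vanishes for `q ≥ 1`: every Čech cocycle of positive degree is a
coboundary. -/
theorem cech_cocycle_is_coboundary_of_partitionOfUnity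
    (G : TopCat.Sheaf AddCommGrpCat.{u} X) (W : ι → Opens ↑X)
    (hLF : LocallyFinite fun i => (W i : Set ↑X))
    (hcov : ∀ x : ↑X, ∃ i, x ∈ W i)
    (pu : PartitionOfUnity G W) :
    ∀ (q : ℕ) (σ : cechPi G.val W (q + 1)), cechδ G.val W (q + 1) σ = 0 →
      ∃ τ : cechPi G.val W q, cechδ G.val W q τ = σ :=
  cech_cocycle_is_coboundary_of_partitionOfUnity_general G W hLF pu

end Paper
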